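/- Let ρ(p) = p |GHZ⟩⟨GHZ| + ((1−p)/4) |0⟩⟨0|⊗I₄ with |GHZ⟩ = (1/√2)(|000⟩ + |111⟩) and 0 ≤ p ≤ 1. Then (i) for all unit vectors a, a', b, b', c, c' ∈ ℝ³ the Svetlichny operator S satisfies |tr(S ρ(p))| ≤ 4√2 p, and (ii) there exist unit vectors a, a', b, b', c, c' ∈ ℝ³ with tr(S ρ(p)) = 4√2 p. Consequently ρ(p) violates the Svetlichny inequality |tr(Sρ)| ≤ 4 if and only if p > 1/√2 (≈ 0.707107). -/

import Mathlib

/-!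
Every summand of `S` is `A ⊗ X` with `tr X = 0`, so the noise `|0⟩⟨0| ⊗ I₄` contributes
nothing. On `|GHZ⟩⟨GHZ|` only the corners `|000⟩`, `|111⟩` of `S` are seen; the diagonal ones
cancel (the `z`-components enter with opposite signs) and the off-diagonal ones are `z` and
`z̄`, where `z` is the Svetlichny polynomial in the off-diagonal entries `a₁ - i a₂, …` of the
observables. Hence `tr(S ρ(p)) = p Re z`. These entries have modulus at most 1, so
`|z| ≤ 2 (|β + β'| + |β - β'|) ≤ 4√2` by the parallelogram law.
-/

open Matrix
open scoped Kronecker ComplexOrder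

/-- The Pauli matrices σ₁, σ₂, σ₃ (indexed by `Fin 3`). -/
noncomputable def pauli : Fin 3 → Matrix (Fin 2) (Fin 2) ℂ :=
  ![!![0, 1; 1, 0], !![0, -Complex.I; Complex.I, 0], !![1, 0; 0, -1]]

/-- The observable `G = g₁σ₁ + g₂σ₂ + g₃σ₃` associated to a real vector `g ∈ ℝ³`. -/
noncomputable def obs (g : Fin 3 → ℝ) : Matrix (Fin 2) (Fin 2) ℂ :=
  ∑ i : Fin 3, ((g i : ℝ) : ℂ) • pauli i

/-- The Svetlichny operator built from the unit vectors `a, a', b, b', c, c' ∈ ℝ³`. -/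
noncomputable def svetlichny (a a' b b' c c' : Fin 3 → ℝ) :
    Matrix (Fin 2 × Fin 2 × Fin 2) (Fin 2 × Fin 2 × Fin 2) ℂ :=
  obs a ⊗ₖ ((obs b + obs b') ⊗ₖ obs c + (obs b - obs b') ⊗ₖ obs c')
    + obs a' ⊗ₖ ((obs b - obs b') ⊗ₖ obs c - (obs b + obs b') ⊗ₖ obs c')

/-- The vector `|GHZ⟩ = (|000⟩ + |111⟩)/√2`. -/
noncomputable def ghz : Fin 2 × Fin 2 × Fin 2 → ℂ :=
  fun x => if x = (0, 0, 0) ∨ x = (1, 1, 1) then (((Real.sqrt 2)⁻¹ : ℝ) : ℂ) else 0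

/-- The rank-one projector `|0⟩⟨0|`. -/
noncomputable def E00 : Matrix (Fin 2) (Fin 2) ℂ := !![1, 0; 0, 0]

/-- The state `ρ(p) = p|GHZ⟩⟨GHZ| + ((1-p)/4)|0⟩⟨0| ⊗ I₄`. -/
noncomputable def rhoGHZ (p : ℝ) :
    Matrix (Fin 2 × Fin 2 × Fin 2) (Fin 2 × Fin 2 × Fin 2) ℂ :=
  (p : ℂ) • Matrix.vecMulVec ghz (star ghz)
    + (((1 - p) / 4 : ℝ) : ℂ) • (E00 ⊗ₖ (1 : Matrix (Fin 2 × Fin 2) (Fin 2 × Fin 2) ℂ))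

open Complex ComplexConjugate

noncomputable def obsOffDiag (g : Fin 3 → ℝ) : ℂ := g 0 - g 1 * I

section obs

variable (g : Fin 3 → ℝ)

lemma obs_apply_zero_zero : obs g 0 0 = g 2 := by
  simp [obs, pauli, Fin.sum_univ_three]

lemma obs_apply_zero_one : obs g 0 1 = obsOffDiag g := by
  simp [obs, pauli, obsOffDiag, Fin.sum_univ_three]
  ring

lemma obs_apply_one_zero : obs g 1 0 = conj (obsOffDiag g) := by
  simp [obs, pauli, obsOffDiag, Fin.sum_univ_three]

lemma obs_apply_one_one : obs g 1 1 = -g 2 := by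
  simp [obs, pauli, Fin.sum_univ_three]

lemma trace_obs : (obs g).trace = 0 := by
  simp [Matrix.trace, obs_apply_zero_zero, obs_apply_one_one]

lemma norm_obsOffDiag_le_one (h : ∑ i, g i ^ 2 ≤ 1) : ‖obsOffDiag g‖ ≤ 1 := by
  have hsq : ‖obsOffDiag g‖ ^ 2 = g 0 ^ 2 + g 1 ^ 2 := by
    rw [Complex.sq_norm, Complex.normSq_apply]
    simp only [obsOffDiag, sub_re, ofReal_re, mul_re, I_re, mul_zero, ofReal_im, I_im, mul_one,
      sub_self, sub_zero, sub_im, mul_im, add_zero, zero_sub, mul_neg, neg_mul, neg_neg]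
    ring
  rw [Fin.sum_univ_three] at h
  nlinarith [norm_nonneg (obsOffDiag g), sq_nonneg (g 2)]

end obs

lemma trace_kronecker_mul_kronecker_one {m n R : Type*} [Fintype m] [Fintype n] [DecidableEq n]
    [CommSemiring R] (A E : Matrix m m R) (X : Matrix n n R) :
    ((A ⊗ₖ X) * (E ⊗ₖ 1)).trace = (A * E).trace * X.trace := by
  rw [← mul_kronecker_mul, Matrix.mul_one, trace_kronecker]

lemma trace_svetlichny_mul_E00_kronecker_one (a a' b b' c c' : Fin 3 → ℝ) :
    (svetlichny a a' b b' c c' * (E00 ⊗ₖ (1 : Matrix (Fin 2 × Fin 2) (Fin 2 × Fin 2) ℂ))).trace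
      = 0 := by
  simp only [svetlichny, add_mul, trace_add, trace_kronecker_mul_kronecker_one, trace_sub,
    trace_kronecker, trace_obs]
  ring

lemma trace_mul_ghz (M : Matrix (Fin 2 × Fin 2 × Fin 2) (Fin 2 × Fin 2 × Fin 2) ℂ) :
    (M * vecMulVec ghz (star ghz)).trace
      = (M (0, 0, 0) (0, 0, 0) + M (0, 0, 0) (1, 1, 1)
          + M (1, 1, 1) (0, 0, 0) + M (1, 1, 1) (1, 1, 1)) / 2 := by
  have hsq : ((√2 : ℂ))⁻¹ ^ 2 = 1 / 2 := by
    rw [inv_pow, ← ofReal_pow, Real.sq_sqrt zero_le_two]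
    norm_num
  rw [mul_vecMulVec, trace_vecMulVec]
  simp only [dotProduct, mulVec, Pi.star_apply, ghz, Fintype.sum_prod_type, Fin.sum_univ_two]
  norm_num [Prod.ext_iff, conj_ofReal]
  linear_combination (M (0, 0, 0) (0, 0, 0) + M (0, 0, 0) (1, 1, 1)
    + M (1, 1, 1) (0, 0, 0) + M (1, 1, 1) (1, 1, 1)) * hsq

noncomputable def svetlichnyPoly (α α' β β' γ γ' : ℂ) : ℂ :=
  α * ((β + β') * γ + (β - β') * γ') + α' * ((β - β') * γ - (β + β') * γ')

lemma trace_svetlichny_mul_ghz (a a' b b' c c' : Fin 3 → ℝ) :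
    (svetlichny a a' b b' c c' * vecMulVec ghz (star ghz)).trace
      = (svetlichnyPoly (obsOffDiag a) (obsOffDiag a') (obsOffDiag b) (obsOffDiag b')
          (obsOffDiag c) (obsOffDiag c')).re := by
  set z := svetlichnyPoly (obsOffDiag a) (obsOffDiag a') (obsOffDiag b) (obsOffDiag b')
    (obsOffDiag c) (obsOffDiag c')
  have hcorners : (svetlichny a a' b b' c c' * vecMulVec ghz (star ghz)).trace
      = (z + conj z) / 2 := by
    rw [trace_mul_ghz]
    simp only [z, svetlichny, svetlichnyPoly, Matrix.add_apply, Matrix.sub_apply,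
      kroneckerMap_apply, obs_apply_zero_zero, obs_apply_zero_one, obs_apply_one_zero,
      obs_apply_one_one, map_add, map_mul, map_sub]
    ring
  rw [hcorners, add_conj]
  push_cast
  ring

lemma trace_svetlichny_mul_rhoGHZ (p : ℝ) (a a' b b' c c' : Fin 3 → ℝ) :
    (svetlichny a a' b b' c c' * rhoGHZ p).trace
      = p * (svetlichnyPoly (obsOffDiag a) (obsOffDiag a') (obsOffDiag b) (obsOffDiag b')
          (obsOffDiag c) (obsOffDiag c')).re := by
  rw [rhoGHZ, Matrix.mul_add, Matrix.mul_smul, Matrix.mul_smul, trace_add, trace_smul,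
    trace_smul, trace_svetlichny_mul_ghz, trace_svetlichny_mul_E00_kronecker_one, smul_zero,
    add_zero, smul_eq_mul]

lemma norm_add_add_norm_sub_le {E : Type*} [NormedAddCommGroup E] [InnerProductSpace ℝ E]
    {x y : E} (hx : ‖x‖ ≤ 1) (hy : ‖y‖ ≤ 1) : ‖x + y‖ + ‖x - y‖ ≤ 2 * √2 := by
  have hpar := parallelogram_law_with_norm ℝ x y
  nlinarith [sq_nonneg (‖x + y‖ - ‖x - y‖), Real.sq_sqrt (zero_le_two : (0 : ℝ) ≤ 2),
    Real.sqrt_nonneg 2, norm_nonneg x, norm_nonneg y, norm_nonneg (x + y), norm_nonneg (x - y)]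

lemma norm_mul_add_mul_le {R : Type*} [SeminormedRing R] {a b : R} (ha : ‖a‖ ≤ 1)
    (hb : ‖b‖ ≤ 1) (x y : R) : ‖a * x + b * y‖ ≤ ‖x‖ + ‖y‖ :=
  calc ‖a * x + b * y‖ ≤ ‖a‖ * ‖x‖ + ‖b‖ * ‖y‖ :=
        (norm_add_le _ _).trans (add_le_add (norm_mul_le _ _) (norm_mul_le _ _))
    _ ≤ ‖x‖ + ‖y‖ := add_le_add (mul_le_of_le_one_left (norm_nonneg _) ha)
        (mul_le_of_le_one_left (norm_nonneg _) hb)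

lemma norm_svetlichnyPoly_le {α α' β β' γ γ' : ℂ} (hα : ‖α‖ ≤ 1) (hα' : ‖α'‖ ≤ 1)
    (hβ : ‖β‖ ≤ 1) (hβ' : ‖β'‖ ≤ 1) (hγ : ‖γ‖ ≤ 1) (hγ' : ‖γ'‖ ≤ 1) :
    ‖svetlichnyPoly α α' β β' γ γ'‖ ≤ 4 * √2 := by
  have hX : ‖(β + β') * γ + (β - β') * γ'‖ ≤ ‖β + β'‖ + ‖β - β'‖ := by
    rw [mul_comm (β + β'), mul_comm (β - β')]
    exact norm_mul_add_mul_le hγ hγ' _ _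
  have hY : ‖(β - β') * γ - (β + β') * γ'‖ ≤ ‖β + β'‖ + ‖β - β'‖ := by
    rw [sub_eq_add_neg, ← mul_neg, mul_comm (β - β'), mul_comm (β + β'), add_comm (‖β + β'‖)]
    exact norm_mul_add_mul_le hγ ((norm_neg γ').trans_le hγ') _ _
  have hst := norm_add_add_norm_sub_le hβ hβ'
  calc ‖svetlichnyPoly α α' β β' γ γ'‖
      ≤ ‖(β + β') * γ + (β - β') * γ'‖ + ‖(β - β') * γ - (β + β') * γ'‖ :=
        norm_mul_add_mul_le hα hα' _ _
    _ ≤ 4 * √2 := by linarith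

-- Off-diagonal entries `1, i, 1, i, e^{-iπ/4}, e^{iπ/4}`: each of the four products in
-- `svetlichnyPoly` then equals `√2`.
noncomputable def unitX : Fin 3 → ℝ := ![1, 0, 0]
noncomputable def negUnitY : Fin 3 → ℝ := ![0, -1, 0]
noncomputable def diagXY : Fin 3 → ℝ := ![(√2)⁻¹, (√2)⁻¹, 0]
noncomputable def antidiagXY : Fin 3 → ℝ := ![(√2)⁻¹, -(√2)⁻¹, 0]

lemma sum_sq_unitX : ∑ i, unitX i ^ 2 = 1 := by
  simp [unitX, Fin.sum_univ_three]

lemma sum_sq_negUnitY : ∑ i, negUnitY i ^ 2 = 1 := by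
  simp [negUnitY, Fin.sum_univ_three]

lemma sum_sq_diagXY : ∑ i, diagXY i ^ 2 = 1 := by
  simp [diagXY, Fin.sum_univ_three]
  norm_num

lemma sum_sq_antidiagXY : ∑ i, antidiagXY i ^ 2 = 1 := by
  simp [antidiagXY, Fin.sum_univ_three]
  norm_num

lemma svetlichnyPoly_optimal :
    svetlichnyPoly (obsOffDiag unitX) (obsOffDiag negUnitY) (obsOffDiag unitX)
      (obsOffDiag negUnitY) (obsOffDiag diagXY) (obsOffDiag antidiagXY)
      = ((4 * √2 : ℝ) : ℂ) := by
  have h2 : ((√2 : ℝ) : ℂ) ^ 2 = 2 := by rw [← ofReal_pow, Real.sq_sqrt zero_le_two]; norm_num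
  have hne : ((√2 : ℝ) : ℂ) ≠ 0 := by exact_mod_cast (Real.sqrt_pos.2 zero_lt_two).ne'
  simp only [svetlichnyPoly, obsOffDiag, unitX, negUnitY, diagXY, antidiagXY]
  push_cast
  simp only [zero_mul, sub_zero, neg_mul, one_mul, sub_neg_eq_add, zero_add]
  field_simp
  linear_combination (-4) * h2 - 6 * I_sq

lemma four_lt_mul_iff_inv_sqrt_two_lt {p : ℝ} : 4 < 4 * √2 * p ↔ 1 / √2 < p := by
  have hs : 0 < √2 := Real.sqrt_pos.2 zero_lt_two
  rw [div_lt_iff₀ hs]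
  constructor <;> intro h <;> nlinarith

lemma norm_trace_svetlichny_mul_rhoGHZ_le {p : ℝ} (hp : 0 ≤ p) {a a' b b' c c' : Fin 3 → ℝ}
    (ha : ∑ i, a i ^ 2 ≤ 1) (ha' : ∑ i, a' i ^ 2 ≤ 1) (hb : ∑ i, b i ^ 2 ≤ 1)
    (hb' : ∑ i, b' i ^ 2 ≤ 1) (hc : ∑ i, c i ^ 2 ≤ 1) (hc' : ∑ i, c' i ^ 2 ≤ 1) :
    ‖(svetlichny a a' b b' c c' * rhoGHZ p).trace‖ ≤ 4 * √2 * p := by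
  rw [trace_svetlichny_mul_rhoGHZ, ← ofReal_mul, norm_real, Real.norm_eq_abs, abs_mul,
    abs_of_nonneg hp, mul_comm]
  refine mul_le_mul_of_nonneg_right ((abs_re_le_norm _).trans ?_) hp
  exact norm_svetlichnyPoly_le (norm_obsOffDiag_le_one a ha) (norm_obsOffDiag_le_one a' ha')
    (norm_obsOffDiag_le_one b hb) (norm_obsOffDiag_le_one b' hb') (norm_obsOffDiag_le_one c hc)
    (norm_obsOffDiag_le_one c' hc')

lemma trace_svetlichny_optimal_mul_rhoGHZ (p : ℝ) :
    (svetlichny unitX negUnitY unitX negUnitY diagXY antidiagXY * rhoGHZ p).trace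
      = ((4 * √2 * p : ℝ) : ℂ) := by
  rw [trace_svetlichny_mul_rhoGHZ, svetlichnyPoly_optimal, ofReal_re]
  push_cast
  ring

theorem svetlichny_rhoGHZ_general (p : ℝ) (hp0 : 0 ≤ p) :
    (∀ a a' b b' c c' : Fin 3 → ℝ,
      (∑ i : Fin 3, a i ^ 2 = 1) → (∑ i : Fin 3, a' i ^ 2 = 1) →
      (∑ i : Fin 3, b i ^ 2 = 1) → (∑ i : Fin 3, b' i ^ 2 = 1) →
      (∑ i : Fin 3, c i ^ 2 = 1) → (∑ i : Fin 3, c' i ^ 2 = 1) →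
      ‖(svetlichny a a' b b' c c' * rhoGHZ p).trace‖ ≤ 4 * Real.sqrt 2 * p)
    ∧ (∃ a a' b b' c c' : Fin 3 → ℝ,
      (∑ i : Fin 3, a i ^ 2 = 1) ∧ (∑ i : Fin 3, a' i ^ 2 = 1) ∧
      (∑ i : Fin 3, b i ^ 2 = 1) ∧ (∑ i : Fin 3, b' i ^ 2 = 1) ∧
      (∑ i : Fin 3, c i ^ 2 = 1) ∧ (∑ i : Fin 3, c' i ^ 2 = 1) ∧
      (svetlichny a a' b b' c c' * rhoGHZ p).trace = ((4 * Real.sqrt 2 * p : ℝ) : ℂ))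
    ∧ ((∃ a a' b b' c c' : Fin 3 → ℝ,
        (∑ i : Fin 3, a i ^ 2 = 1) ∧ (∑ i : Fin 3, a' i ^ 2 = 1) ∧
        (∑ i : Fin 3, b i ^ 2 = 1) ∧ (∑ i : Fin 3, b' i ^ 2 = 1) ∧
        (∑ i : Fin 3, c i ^ 2 = 1) ∧ (∑ i : Fin 3, c' i ^ 2 = 1) ∧
        4 < ‖(svetlichny a a' b b' c c' * rhoGHZ p).trace‖)
      ↔ 1 / Real.sqrt 2 < p) := by
  refine ⟨fun a a' b b' c c' ha ha' hb hb' hc hc' ↦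
      norm_trace_svetlichny_mul_rhoGHZ_le hp0 ha.le ha'.le hb.le hb'.le hc.le hc'.le,
    ⟨_, _, _, _, _, _, sum_sq_unitX, sum_sq_negUnitY, sum_sq_unitX, sum_sq_negUnitY,
      sum_sq_diagXY, sum_sq_antidiagXY, trace_svetlichny_optimal_mul_rhoGHZ p⟩, ?_⟩
  rw [← four_lt_mul_iff_inv_sqrt_two_lt]
  constructor
  · rintro ⟨a, a', b, b', c, c', ha, ha', hb, hb', hc, hc', hviol⟩
    exact hviol.trans_le
      (norm_trace_svetlichny_mul_rhoGHZ_le hp0 ha.le ha'.le hb.le hb'.le hc.le hc'.le)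
  · intro hp
    refine ⟨_, _, _, _, _, _, sum_sq_unitX, sum_sq_negUnitY, sum_sq_unitX,
      sum_sq_negUnitY, sum_sq_diagXY, sum_sq_antidiagXY, ?_⟩
    rwa [trace_svetlichny_optimal_mul_rhoGHZ, norm_real, Real.norm_of_nonneg (by positivity)]

/-- (i) Every Svetlichny operator mean value on `ρ(p)` is bounded by `4√2 p`;
(ii) the bound is attained; consequently `ρ(p)` violates the Svetlichny inequality
`|tr(Sρ)| ≤ 4` if and only if `p > 1/√2`. -/
theorem svetlichny_rhoGHZ (p : ℝ) (hp0 : 0 ≤ p) (hp1 : p ≤ 1) :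
    (∀ a a' b b' c c' : Fin 3 → ℝ,
      (∑ i : Fin 3, a i ^ 2 = 1) → (∑ i : Fin 3, a' i ^ 2 = 1) →
      (∑ i : Fin 3, b i ^ 2 = 1) → (∑ i : Fin 3, b' i ^ 2 = 1) →
      (∑ i : Fin 3, c i ^ 2 = 1) → (∑ i : Fin 3, c' i ^ 2 = 1) →
      ‖(svetlichny a a' b b' c c' * rhoGHZ p).trace‖ ≤ 4 * Real.sqrt 2 * p)
    ∧ (∃ a a' b b' c c' : Fin 3 → ℝ,
      (∑ i : Fin 3, a i ^ 2 = 1) ∧ (∑ i : Fin 3, a' i ^ 2 = 1) ∧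
      (∑ i : Fin 3, b i ^ 2 = 1) ∧ (∑ i : Fin 3, b' i ^ 2 = 1) ∧
      (∑ i : Fin 3, c i ^ 2 = 1) ∧ (∑ i : Fin 3, c' i ^ 2 = 1) ∧
      (svetlichny a a' b b' c c' * rhoGHZ p).trace = ((4 * Real.sqrt 2 * p : ℝ) : ℂ))
    ∧ ((∃ a a' b b' c c' : Fin 3 → ℝ,
        (∑ i : Fin 3, a i ^ 2 = 1) ∧ (∑ i : Fin 3, a' i ^ 2 = 1) ∧
        (∑ i : Fin 3, b i ^ 2 = 1) ∧ (∑ i : Fin 3, b' i ^ 2 = 1) ∧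
        (∑ i : Fin 3, c i ^ 2 = 1) ∧ (∑ i : Fin 3, c' i ^ 2 = 1) ∧
        4 < ‖(svetlichny a a' b b' c c' * rhoGHZ p).trace‖)
      ↔ 1 / Real.sqrt 2 < p) :=
  svetlichny_rhoGHZ_general p hp0
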